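/- Let ϑ̂_n be real random variables with ϑ̂_n = ϑ₀ + o_P(n^{-1/2}) for some ϑ₀ ∈ (0,1). Then sup over λ ∈ [0,1] with ⌊λ⌊nϑ̂_n⌋⌋ ≥ ⌊nϑ₀⌋ of |⌊nϑ₀⌋/⌊λ⌊nϑ̂_n⌋⌋ − 1| = o_P(n^{-1/2}), i.e. on that range the ratio ⌊nϑ₀⌋/⌊λ⌊nϑ̂_n⌋⌋ equals 1 + o_P(n^{-1/2}). -/
import Mathlib


open MeasureTheory ProbabilityTheory Filter

/-- If `ϑ̂ₙ = ϑ₀ + o_P(n^{-1/2})` with `ϑ₀ ∈ (0,1)`, then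
`sup { |⌊nϑ₀⌋/⌊λ⌊nϑ̂ₙ⌋⌋ - 1| : λ ∈ [0,1], ⌊λ⌊nϑ̂ₙ⌋⌋ ≥ ⌊nϑ₀⌋ } = o_P(n^{-1/2})`. -/
theorem floor_ratio_oP {Ω : Type*} [MeasureSpace Ω]
    [IsProbabilityMeasure (ℙ : Measure Ω)]
    (ϑhat : ℕ → Ω → ℝ) (hmeas : ∀ n, Measurable (ϑhat n))
    (hrange : ∀ n ω, ϑhat n ω ∈ Set.Icc (0:ℝ) 1)
    (ϑ0 : ℝ) (hϑ0 : ϑ0 ∈ Set.Ioo (0:ℝ) 1)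
    (hoP : ∀ ε > (0:ℝ),
      Tendsto (fun (n : ℕ) =>
          ((ℙ : Measure Ω) {ω | ε < Real.sqrt (n : ℝ) * |ϑhat n ω - ϑ0|}).toReal)
        atTop (nhds 0)) :
    ∀ ε > (0:ℝ),
      Tendsto (fun (n : ℕ) =>
          ((ℙ : Measure Ω) {ω | ε < Real.sqrt (n : ℝ) *
            sSup {x : ℝ | ∃ lam ∈ Set.Icc (0:ℝ) 1,
              Nat.floor ((n:ℝ) * ϑ0) ≤ Nat.floor (lam * (Nat.floor ((n:ℝ) * ϑhat n ω) : ℝ)) ∧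
              x = |(Nat.floor ((n:ℝ) * ϑ0) : ℝ)
                    / (Nat.floor (lam * (Nat.floor ((n:ℝ) * ϑhat n ω) : ℝ)) : ℝ) - 1|}}).toReal)
        atTop (nhds 0) := by
  intro ε hε
  obtain ⟨hϑ1, hϑ2⟩ := hϑ0
  have hε' : (0:ℝ) < ε * ϑ0 / 4 := by positivity
  have h1 : ∀ᶠ n : ℕ in atTop, (2/ϑ0 : ℝ) ≤ (n:ℝ) :=
    (tendsto_natCast_atTop_atTop (R := ℝ)).eventually_ge_atTop _
  have h2 : ∀ᶠ n : ℕ in atTop, (4/(ε*ϑ0) : ℝ) ≤ Real.sqrt n := by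
    filter_upwards [(tendsto_natCast_atTop_atTop (R := ℝ)).eventually_ge_atTop
      ((4/(ε*ϑ0))^2)] with n hn
    rw [show ((4:ℝ)/(ε*ϑ0)) = Real.sqrt ((4/(ε*ϑ0))^2) from
      (Real.sqrt_sq (by positivity)).symm]
    exact Real.sqrt_le_sqrt hn
  have key : ∀ᶠ n : ℕ in atTop, ∀ ω : Ω,
      ε < Real.sqrt (n : ℝ) *
            sSup {x : ℝ | ∃ lam ∈ Set.Icc (0:ℝ) 1,
              Nat.floor ((n:ℝ) * ϑ0) ≤ Nat.floor (lam * (Nat.floor ((n:ℝ) * ϑhat n ω) : ℝ)) ∧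
              x = |(Nat.floor ((n:ℝ) * ϑ0) : ℝ)
                    / (Nat.floor (lam * (Nat.floor ((n:ℝ) * ϑhat n ω) : ℝ)) : ℝ) - 1|} →
      ε * ϑ0 / 4 < Real.sqrt (n:ℝ) * |ϑhat n ω - ϑ0| := by
    filter_upwards [h1, h2] with n hn1 hn2 ω hyp
    obtain ⟨ha0, ha1⟩ := hrange n ω
    set a := ϑhat n ω with ha
    have hn0 : (0:ℝ) < n := lt_of_lt_of_le (by positivity) hn1
    have hnt : 2 ≤ (n:ℝ) * ϑ0 := by
      rw [div_le_iff₀ hϑ1] at hn1; linarith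
    set m := Nat.floor ((n:ℝ) * ϑ0) with hmdef
    have hm : (n:ℝ)*ϑ0 - 1 < m := Nat.sub_one_lt_floor _
    have hm1 : (n:ℝ)*ϑ0/2 ≤ m := by linarith
    have hmpos : (0:ℝ) < m := by linarith
    set s := Real.sqrt (n:ℝ) with hsdef
    have hs : 0 < s := Real.sqrt_pos.2 hn0
    have hss : s*s = (n:ℝ) := Real.mul_self_sqrt hn0.le
    set q := |a - ϑ0| with hqdef
    have hq : 0 ≤ q := abs_nonneg _
    have hsup : sSup {x : ℝ | ∃ lam ∈ Set.Icc (0:ℝ) 1,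
              m ≤ Nat.floor (lam * (Nat.floor ((n:ℝ) * a) : ℝ)) ∧
              x = |(m : ℝ)
                    / (Nat.floor (lam * (Nat.floor ((n:ℝ) * a) : ℝ)) : ℝ) - 1|}
        ≤ ((n:ℝ)*q + 1)/m := by
      apply Real.sSup_le
      · rintro x ⟨lam, ⟨hl0, hl1⟩, hk, rfl⟩
        set M := Nat.floor ((n:ℝ) * a) with hMdef
        set k := Nat.floor (lam * (M:ℝ)) with hkdef
        have hkM : k ≤ M := by
          have hlm : lam * (M:ℝ) ≤ (M:ℝ) := mul_le_of_le_one_left (Nat.cast_nonneg M) hl1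
          calc k ≤ Nat.floor ((M:ℝ)) := Nat.floor_le_floor hlm
            _ = M := Nat.floor_natCast M
        have hkM' : (k:ℝ) ≤ (M:ℝ) := Nat.cast_le.2 hkM
        have hmk : (m:ℝ) ≤ (k:ℝ) := Nat.cast_le.2 hk
        have hkpos : (0:ℝ) < k := lt_of_lt_of_le hmpos hmk
        have hMna : (M:ℝ) ≤ (n:ℝ)*a := Nat.floor_le (by positivity)
        have hdiv : (m:ℝ)/k ≤ 1 := (div_le_one hkpos).2 hmk
        have habs : |(m:ℝ)/k - 1| = 1 - (m:ℝ)/k := by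
          rw [abs_sub_comm, abs_of_nonneg (by linarith)]
        rw [habs, le_div_iff₀ hmpos]
        have e2 : (1 - (m:ℝ)/k) * m ≤ (1 - (m:ℝ)/k) * k :=
          mul_le_mul_of_nonneg_left hmk (by linarith)
        have e1 : (1 - (m:ℝ)/k) * k = (k:ℝ) - m := by field_simp
        have e3 : (n:ℝ)*a - (n:ℝ)*ϑ0 ≤ (n:ℝ)*q := by
          have h := le_abs_self (a - ϑ0)
          nlinarith [hn0.le]
        linarith [e2, e1.le]
      · positivity
    have hεb : ε < s * (((n:ℝ)*q + 1)/m) :=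
      hyp.trans_le (mul_le_mul_of_nonneg_left hsup hs.le)
    rw [← mul_div_assoc] at hεb
    have h3 : ε * m < s * ((n:ℝ)*q + 1) := (lt_div_iff₀ hmpos).1 hεb
    have h4 : 4 ≤ s * (ε*ϑ0) := by
      rw [div_le_iff₀ (by positivity)] at hn2; linarith
    have hnss : (n:ℝ) = s*s := hss.symm
    rw [hnss] at h3 hm1
    nlinarith [mul_le_mul_of_nonneg_left hm1 hε.le, mul_le_mul_of_nonneg_left h4 hs.le,
      mul_pos hs hs, hq, hs.le]
  apply squeeze_zero' (Eventually.of_forall fun n => ENNReal.toReal_nonneg) ?_ (hoP (ε*ϑ0/4) hε')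
  filter_upwards [key] with n hn
  exact ENNReal.toReal_mono (measure_ne_top _ _) (measure_mono fun ω hω => hn ω hω)
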